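/- If χ is a primitive Dirichlet character mod q with q > 1, then for all complex s, L(1−s, conj(χ)) = τ(conj(χ))·q^{s−1}·(2π)^{−s}·Γ(s)·(e^{−πis/2} + χ(−1)·e^{πis/2})·L(s, χ), where τ denotes the Gauss sum. -/

import Mathlib

/-!
The primitive character `ψ = χ̄` has discrete Fourier transform `𝓕 ψ (k) = ψ⁻¹(-k) τ(ψ)` with
`ψ⁻¹ = χ`. Feeding this into the functional equation of `L(Φ, s) = ∑ Φ(n) n⁻ˢ` for an arbitrary
`Φ : ZMod q → ℂ`, which relates `L(Φ, 1 - s)` to `L(𝓕 Φ, s)` and `L(𝓕 (Φ ∘ neg), s)`, both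
transforms become multiples of `L(χ, s)`. Since `q > 1`, `χ̄(0) = 0`, so the residue class `0`,
whose Hurwitz zeta function has a pole at `s = 1`, does not contribute.
-/

open Complex Real

/-- Gauss sum `τ(χ) = ∑_{a=1}^{q} χ(a) e(a/q)`. -/
noncomputable def tauSum {q : ℕ} (χ : DirichletCharacter ℂ q) : ℂ :=
  ∑ a ∈ Finset.range q, χ (a : ZMod q) * Complex.exp (2 * Real.pi * Complex.I * a / q)

open ZMod

lemma tauSum_eq_gaussSum {q : ℕ} [NeZero q] (χ : DirichletCharacter ℂ q) :
    tauSum χ = gaussSum χ stdAddChar := by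
  refine Finset.sum_nbij' (fun a ↦ (a : ZMod q)) ZMod.val (fun _ _ ↦ Finset.mem_univ _)
    (fun b _ ↦ Finset.mem_range.mpr b.val_lt)
    (fun a ha ↦ val_natCast_of_lt (Finset.mem_range.mp ha)) (fun b _ ↦ natCast_zmod_val b) ?_
  intro a _
  rw [← Int.cast_natCast, stdAddChar_coe]
  push_cast
  rfl

lemma ZMod.LFunction_const_mul {q : ℕ} [NeZero q] (c : ℂ) (Φ : ZMod q → ℂ) (s : ℂ) :
    LFunction (fun j ↦ c * Φ j) s = c * LFunction Φ s := by
  simp only [LFunction, mul_assoc, ← Finset.mul_sum]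
  ring

namespace DirichletCharacter

variable {q : ℕ} {ψ : DirichletCharacter ℂ q}

lemma IsPrimitive.star (hψ : ψ.IsPrimitive) : (star ψ).IsPrimitive := by
  rwa [isPrimitive_def, MulChar.star_eq_inv, conductor_inv]

variable [NeZero q]

lemma IsPrimitive.dft_comp_neg (hψ : ψ.IsPrimitive) :
    𝓕 (fun j ↦ ψ (-j)) = fun k ↦ gaussSum ψ stdAddChar * ψ⁻¹ k := by
  rw [ZMod.dft_comp_neg]
  ext k
  rw [hψ.fourierTransform_eq_inv_mul_gaussSum, neg_neg, mul_comm]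

lemma IsPrimitive.dft (hψ : ψ.IsPrimitive) :
    𝓕 ψ = fun k ↦ ψ⁻¹ (-1) * gaussSum ψ stdAddChar * ψ⁻¹ k := by
  ext k
  rw [hψ.fourierTransform_eq_inv_mul_gaussSum, ← neg_one_mul k, map_mul]
  ring

theorem IsPrimitive.LFunction_one_sub (hψ : ψ.IsPrimitive) (hq : q ≠ 1) {s : ℂ}
    (hs : ∀ n : ℕ, s ≠ -n) :
    LFunction ψ (1 - s) = q ^ (s - 1) * (2 * π) ^ (-s) * Gamma s *
      (cexp (π * I * s / 2) * ψ⁻¹ (-1) + cexp (-π * I * s / 2)) *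
      gaussSum ψ stdAddChar * LFunction ψ⁻¹ s := by
  rw [LFunction, ZMod.LFunction_one_sub _ hs (.inl (ψ.map_zero' hq)), hψ.dft, hψ.dft_comp_neg,
    ZMod.LFunction_const_mul, ZMod.LFunction_const_mul, LFunction]
  ring

end DirichletCharacter

theorem functional_equation (q : ℕ) [NeZero q] (hq : 1 < q)
    (χ : DirichletCharacter ℂ q) (hχ : χ.IsPrimitive) (s : ℂ)
    (hs : ∀ k : ℕ, s ≠ -(k : ℂ)) :
    DirichletCharacter.LFunction (star χ) (1 - s) =
      tauSum (star χ) * (q : ℂ) ^ (s - 1) * (2 * (Real.pi : ℂ)) ^ (-s) *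
        Complex.Gamma s *
        (Complex.exp (-(Real.pi : ℂ) * Complex.I * s / 2) +
          χ (-1) * Complex.exp ((Real.pi : ℂ) * Complex.I * s / 2)) *
        DirichletCharacter.LFunction χ s := by
  have hinv : (star χ)⁻¹ = χ := by rw [MulChar.star_eq_inv, inv_inv]
  rw [hχ.star.LFunction_one_sub hq.ne' hs, hinv, tauSum_eq_gaussSum]
  ring
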